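/- arXiv:0904.1078 — 5 statements merged into one kernel-verified Lean document; each statement's English description precedes it below -/
import Mathlib

section
/- Let p, q be positive integers, let α_1, …, α_p ≥ 0 and β_1, …, β_q ≥ 0 be real numbers, let γ ∈ ℝ, and set A(z) = Σ_{i=1}^p α_i z^i and B(z) = Σ_{i=1}^q β_i z^i. Then every complex root z of the polynomial 1 − (1+γ²)A(z) − B(z) satisfies |z| > 1 if and only if (1+γ²)A(1) + B(1) < 1. -/
/-!
Write the characteristic equation as `P(z) = 1` with `P = (1+γ²)A + B`, a real polynomial with
nonnegative coefficients and `P(0) = 0`. On the closed unit disk `|P(z)| ≤ P(|z|) ≤ P(1)`, so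
`P(1) < 1` rules out roots there. Conversely, if `P(1) ≥ 1`, the intermediate value theorem on
`[0, 1]` yields a real root `t ∈ [0, 1]` of `P(t) = 1`.
-/

open Polynomial Finset

section NonnegCoeff

variable {P : ℝ[X]}

theorem Polynomial.norm_aeval_le_eval_one_of_coeff_nonneg {A : Type*} [NormedRing A]
    [NormedAlgebra ℝ A] [NormOneClass A] (hP : ∀ n, 0 ≤ P.coeff n) {z : A} (hz : ‖z‖ ≤ 1) :
    ‖aeval z P‖ ≤ P.eval 1 := by
  rw [aeval_eq_sum_range, eval_eq_sum_range]
  refine (norm_sum_le _ _).trans (sum_le_sum fun n _ => ?_)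
  calc ‖P.coeff n • z ^ n‖ ≤ P.coeff n * ‖z‖ ^ n := by
        rw [norm_smul, Real.norm_of_nonneg (hP n)]
        exact mul_le_mul_of_nonneg_left (norm_pow_le z n) (hP n)
    _ ≤ P.coeff n * 1 ^ n := by gcongr; exact hP n

theorem Polynomial.exists_mem_Icc_eval_eq_one (hP0 : P.coeff 0 = 0) (hP1 : 1 ≤ P.eval 1) :
    ∃ t ∈ Set.Icc (0 : ℝ) 1, P.eval t = 1 := by
  refine intermediate_value_Icc zero_le_one P.continuous.continuousOn ⟨?_, hP1⟩
  rw [← coeff_zero_eq_eval_zero, hP0]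
  exact zero_le_one

theorem Polynomial.one_lt_norm_of_aeval_eq_one_iff {K : Type*} [RCLike K]
    (hP : ∀ n, 0 ≤ P.coeff n) (hP0 : P.coeff 0 = 0) :
    (∀ z : K, aeval z P = 1 → 1 < ‖z‖) ↔ P.eval 1 < 1 := by
  constructor
  · intro h
    by_contra! hP1
    obtain ⟨t, ⟨ht0, ht1⟩, ht⟩ := exists_mem_Icc_eval_eq_one hP0 hP1
    have := h t (by rw [aeval_ofReal, ht, RCLike.ofReal_one])
    rw [RCLike.norm_ofReal, abs_of_nonneg ht0] at this
    linarith
  · intro hP1 z hz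
    by_contra! hle
    have := norm_aeval_le_eval_one_of_coeff_nonneg hP hle
    rw [hz, norm_one] at this
    linarith

end NonnegCoeff

theorem Polynomial.coeff_sum_C_mul_X_pow_nonneg {s : Finset ℕ} {c : ℕ → ℝ}
    (hc : ∀ i ∈ s, 0 ≤ c i) (n : ℕ) : 0 ≤ (∑ i ∈ s, C (c i) * X ^ i).coeff n := by
  rw [finsetSum_coeff]
  refine sum_nonneg fun i hi => ?_
  rw [coeff_C_mul_X_pow]
  split_ifs
  exacts [hc i hi, le_rfl]

theorem Polynomial.coeff_zero_sum_C_mul_X_pow {s : Finset ℕ} (hs : 0 ∉ s) (c : ℕ → ℝ) :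
    (∑ i ∈ s, C (c i) * X ^ i).coeff 0 = 0 := by
  rw [finsetSum_coeff]
  refine sum_eq_zero fun i hi => ?_
  rw [coeff_C_mul_X_pow, if_neg (by rintro rfl; exact hs hi)]

theorem stmt0_general (p q : ℕ) (α β : ℕ → ℝ)
    (hα : ∀ i ∈ Finset.Icc 1 p, 0 ≤ α i)
    (hβ : ∀ j ∈ Finset.Icc 1 q, 0 ≤ β j) (γ : ℝ) :
    (∀ z : ℂ,
        1 - (1 + (γ : ℂ) ^ 2) * (∑ i ∈ Finset.Icc 1 p, (α i : ℂ) * z ^ i)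
          - (∑ j ∈ Finset.Icc 1 q, (β j : ℂ) * z ^ j) = 0 → 1 < ‖z‖)
      ↔ (1 + γ ^ 2) * (∑ i ∈ Finset.Icc 1 p, α i) + (∑ j ∈ Finset.Icc 1 q, β j) < 1 := by
  set A : ℝ[X] := ∑ i ∈ Icc 1 p, C (α i) * X ^ i
  set B : ℝ[X] := ∑ j ∈ Icc 1 q, C (β j) * X ^ j
  set P : ℝ[X] := C (1 + γ ^ 2) * A + B
  have hP : ∀ n, 0 ≤ P.coeff n := fun n => by
    rw [coeff_add, coeff_C_mul]
    exact add_nonneg (mul_nonneg (by positivity) (coeff_sum_C_mul_X_pow_nonneg hα n))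
      (coeff_sum_C_mul_X_pow_nonneg hβ n)
  have hP0 : P.coeff 0 = 0 := by
    rw [coeff_add, coeff_C_mul, coeff_zero_sum_C_mul_X_pow (by simp),
      coeff_zero_sum_C_mul_X_pow (by simp), mul_zero, add_zero]
  have hroot : ∀ z : ℂ, 1 - (1 + (γ : ℂ) ^ 2) * (∑ i ∈ Icc 1 p, (α i : ℂ) * z ^ i)
      - (∑ j ∈ Icc 1 q, (β j : ℂ) * z ^ j) = 0 ↔ aeval z P = 1 := fun z => by
    rw [sub_sub, sub_eq_zero, eq_comm]
    simp only [P, A, B, map_add, map_mul, map_sum, map_pow, aeval_C, aeval_X,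
      Complex.coe_algebraMap, map_one]
  have heval : P.eval 1 = (1 + γ ^ 2) * (∑ i ∈ Icc 1 p, α i) + (∑ j ∈ Icc 1 q, β j) := by
    simp only [P, A, B, eval_add, eval_mul, eval_C, eval_finsetSum, eval_pow, eval_X, one_pow,
      mul_one]
  simp_rw [hroot, ← heval]
  exact one_lt_norm_of_aeval_eq_one_iff hP hP0

/-- Stability criterion for the asymmetric GARCH(p,q) model:
every complex root `z` of `1 - (1+γ²)A(z) - B(z)`, with
`A(z) = Σ_{i=1}^p α_i z^i` and `B(z) = Σ_{j=1}^q β_j z^j` (nonnegative coefficients),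
satisfies `|z| > 1` if and only if `(1+γ²)A(1) + B(1) < 1`. -/
theorem stmt0 (p q : ℕ) (hp : 0 < p) (hq : 0 < q) (α β : ℕ → ℝ)
    (hα : ∀ i ∈ Finset.Icc 1 p, 0 ≤ α i)
    (hβ : ∀ j ∈ Finset.Icc 1 q, 0 ≤ β j) (γ : ℝ) :
    (∀ z : ℂ,
        1 - (1 + (γ : ℂ) ^ 2) * (∑ i ∈ Finset.Icc 1 p, (α i : ℂ) * z ^ i)
          - (∑ j ∈ Finset.Icc 1 q, (β j : ℂ) * z ^ j) = 0 → 1 < ‖z‖)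
      ↔ (1 + γ ^ 2) * (∑ i ∈ Finset.Icc 1 p, α i) + (∑ j ∈ Finset.Icc 1 q, β j) < 1 :=
  stmt0_general p q α β hα hβ γ
end

section
/- Let (Ω, F, ℙ) be a probability space, let 𝒢 ⊆ F be a sub-σ-algebra, let σ be a nonnegative 𝒢-measurable random variable with E[σ⁴] < ∞ and E[σ²] > 0, and let ε be a standard normal random variable independent of 𝒢. Then E[σ⁴ε⁴] = 3 E[σ⁴], and the kurtosis of σε satisfies E[σ⁴ε⁴] / (E[σ²ε²])² = 3 + 3·Var(σ²)/(E[σ²])². In particular the excess kurtosis of σε is strictly positive whenever Var(σ²) > 0. -/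
/-!
Since `σ` is `𝒢`-measurable and `ε` is independent of `𝒢`, `E[(σε)ⁿ] = E[σⁿ] E[εⁿ]`. The Gaussian
moments `E[ε²] = 1` and `E[ε⁴] = 3` come from Stein's integration-by-parts recursion
`E[X^(n+2)] = (n+1) v E[Xⁿ]` for `X ~ 𝒩(0, v)`, so the kurtosis of `σε` is
`3 E[σ⁴] / (E[σ²])² = 3 + 3 Var(σ²) / (E[σ²])²`.
-/

open MeasureTheory ProbabilityTheory Real NNReal

namespace ProbabilityTheory

lemma integrable_pow_gaussianReal (μ : ℝ) (v : ℝ≥0) (n : ℕ) :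
    Integrable (fun x : ℝ => x ^ n) (gaussianReal μ v) :=
  (memLp_id_gaussianReal n).integrable_norm_pow'.mono' (by fun_prop)
    (ae_of_all _ fun x => by simp)

lemma integrable_pow_mul_gaussianPDFReal (μ : ℝ) {v : ℝ≥0} (hv : v ≠ 0) (n : ℕ) :
    Integrable (fun x : ℝ => x ^ n * gaussianPDFReal μ v x) := by
  have h := integrable_pow_gaussianReal μ v n
  rw [gaussianReal_of_var_ne_zero μ hv, integrable_withDensity_iff_integrable_smul'
    (measurable_gaussianPDF μ v) (ae_of_all _ fun _ => gaussianPDF_lt_top)] at h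
  simpa [toReal_gaussianPDF, mul_comm] using h

lemma hasDerivAt_gaussianPDFReal (μ : ℝ) (v : ℝ≥0) (x : ℝ) :
    HasDerivAt (gaussianPDFReal μ v) (-((x - μ) / v) * gaussianPDFReal μ v x) x := by
  have h : HasDerivAt (fun y => -(y - μ) ^ 2 / (2 * v)) (-((x - μ) / v)) x := by
    refine ((((hasDerivAt_id x).sub_const μ).pow 2).neg.div_const _).congr_deriv ?_
    simp only [id]
    ring
  refine (h.exp.const_mul (√(2 * π * v))⁻¹).congr_deriv ?_
  simp only [gaussianPDFReal]
  ring

lemma integral_pow_add_two_gaussianReal (v : ℝ≥0) (n : ℕ) :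
    ∫ x, x ^ (n + 2) ∂gaussianReal 0 v = (n + 1) * v * ∫ x, x ^ n ∂gaussianReal 0 v := by
  rcases eq_or_ne v 0 with rfl | hv
  · simp [gaussianReal_zero_var]
  simp_rw [integral_gaussianReal_eq_integral_smul hv, smul_eq_mul]
  set φ := gaussianPDFReal 0 v
  have hφ : ∀ x, HasDerivAt (fun y => -(v : ℝ) * φ y) (x * φ x) x := fun x => by
    refine ((hasDerivAt_gaussianPDFReal 0 v x).const_mul _).congr_deriv ?_
    field_simp
    ring
  have hint := integrable_pow_mul_gaussianPDFReal 0 hv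
  have hibp := integral_mul_deriv_eq_deriv_mul_of_integrable
    (u := fun x => x ^ (n + 1)) (u' := fun x => (n + 1) * x ^ n)
    (v := fun y => -(v : ℝ) * φ y) (v' := fun x => x * φ x)
    (fun x _ => by simpa using hasDerivAt_pow (n + 1) x) (fun x _ => hφ x)
    ((hint (n + 2)).congr (ae_of_all _ fun x => by simp only [Pi.mul_apply]; ring))
    (((hint n).const_mul ((n + 1) * -(v : ℝ))).congr
      (ae_of_all _ fun x => by simp only [Pi.mul_apply]; ring))
    (((hint (n + 1)).const_mul (-(v : ℝ))).congr
      (ae_of_all _ fun x => by simp only [Pi.mul_apply]; ring))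
  calc ∫ x, φ x * x ^ (n + 2)
      = ∫ x, x ^ (n + 1) * (x * φ x) := by congr 1; ext x; ring
    _ = -∫ x, (n + 1) * x ^ n * (-(v : ℝ) * φ x) := hibp
    _ = (n + 1) * v * ∫ x, φ x * x ^ n := by
      rw [← integral_neg, ← integral_const_mul]; congr 1; ext x; ring

lemma integral_sq_gaussianReal_zero (v : ℝ≥0) : ∫ x, x ^ 2 ∂gaussianReal 0 v = v := by
  simpa using integral_pow_add_two_gaussianReal v 0

lemma integral_pow_four_gaussianReal_zero (v : ℝ≥0) :
    ∫ x, x ^ 4 ∂gaussianReal 0 v = 3 * (v : ℝ) ^ 2 := by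
  rw [integral_pow_add_two_gaussianReal v 2, integral_sq_gaussianReal_zero]
  ring

lemma IndepFun.integral_mul_pow {Ω : Type*} {mΩ : MeasurableSpace Ω} {P : Measure Ω}
    {X Y : Ω → ℝ} (h : IndepFun X Y P) (hX : AEMeasurable X P) (hY : AEMeasurable Y P)
    (n : ℕ) : ∫ ω, (X ω * Y ω) ^ n ∂P = (∫ ω, X ω ^ n ∂P) * ∫ ω, Y ω ^ n ∂P := by
  simpa [mul_pow] using (h.comp (measurable_id.pow_const n) (measurable_id.pow_const n))
    |>.integral_mul_eq_mul_integral (hX.pow_const n).aestronglyMeasurable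
      (hY.pow_const n).aestronglyMeasurable

end ProbabilityTheory

theorem stmt2_general {Ω : Type*} (𝒢 : MeasurableSpace Ω) {m0 : MeasurableSpace Ω}
    (P : Measure Ω) [IsProbabilityMeasure P] (h𝒢 : 𝒢 ≤ m0)
    (σ ε : Ω → ℝ)
    (hσmeas : Measurable[𝒢] σ)
    (hσ2pos : 0 < ∫ ω, σ ω ^ 2 ∂P)
    (hεgauss : Measure.map ε P = gaussianReal 0 1)
    (hindep : Indep (MeasurableSpace.comap ε inferInstance) 𝒢 P) :
    (∫ ω, σ ω ^ 4 * ε ω ^ 4 ∂P = 3 * ∫ ω, σ ω ^ 4 ∂P)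
    ∧ (∫ ω, (σ ω * ε ω) ^ 4 ∂P) / (∫ ω, (σ ω * ε ω) ^ 2 ∂P) ^ 2
        = 3 + 3 * ((∫ ω, (σ ω ^ 2) ^ 2 ∂P - (∫ ω, σ ω ^ 2 ∂P) ^ 2)
            / (∫ ω, σ ω ^ 2 ∂P) ^ 2)
    ∧ (0 < ∫ ω, (σ ω ^ 2) ^ 2 ∂P - (∫ ω, σ ω ^ 2 ∂P) ^ 2 →
        3 < (∫ ω, (σ ω * ε ω) ^ 4 ∂P) / (∫ ω, (σ ω * ε ω) ^ 2 ∂P) ^ 2) := by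
  have hε : HasLaw ε (gaussianReal 0 1) P :=
    ⟨.of_map_ne_zero (hεgauss ▸ IsProbabilityMeasure.ne_zero _), hεgauss⟩
  have hσε : IndepFun σ ε P := ((IndepFun_iff_Indep ε σ P).2
    (indep_of_indep_of_le_right hindep hσmeas.comap_le)).symm
  have hmoment (n : ℕ) :
      ∫ ω, (σ ω * ε ω) ^ n ∂P = (∫ ω, σ ω ^ n ∂P) * ∫ x, x ^ n ∂gaussianReal 0 1 := by
    rw [hσε.integral_mul_pow (hσmeas.mono h𝒢 le_rfl).aemeasurable hε.aemeasurable,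
      ← hε.integral_comp (by fun_prop)]
    rfl
  have h4 : ∫ ω, (σ ω * ε ω) ^ 4 ∂P = 3 * ∫ ω, σ ω ^ 4 ∂P := by
    rw [hmoment, integral_pow_four_gaussianReal_zero]; push_cast; ring
  have h2 : ∫ ω, (σ ω * ε ω) ^ 2 ∂P = ∫ ω, σ ω ^ 2 ∂P := by
    rw [hmoment, integral_sq_gaussianReal_zero]; push_cast; ring
  have hkurt : (∫ ω, (σ ω * ε ω) ^ 4 ∂P) / (∫ ω, (σ ω * ε ω) ^ 2 ∂P) ^ 2
      = 3 + 3 * ((∫ ω, (σ ω ^ 2) ^ 2 ∂P - (∫ ω, σ ω ^ 2 ∂P) ^ 2)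
          / (∫ ω, σ ω ^ 2 ∂P) ^ 2) := by
    simp_rw [h4, h2, ← pow_mul]
    field_simp
    ring
  refine ⟨by simpa [mul_pow] using h4, hkurt, fun hvar => ?_⟩
  rw [hkurt]
  have := div_pos hvar (pow_pos hσ2pos 2)
  linarith

/-- If `σ` is a nonnegative `𝒢`-measurable random variable with
`E[σ⁴] < ∞` and `E[σ²] > 0`, and `ε` is a standard normal random variable independent of
`𝒢`, then `E[σ⁴ε⁴] = 3E[σ⁴]`, the kurtosis of `σε` equals
`3 + 3·Var(σ²)/(E[σ²])²`, and the excess kurtosis is strictly positive whenever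
`Var(σ²) > 0` (Gouriéroux's formula: heteroscedasticity implies leptokurtosis). -/
theorem stmt2 {Ω : Type*} (𝒢 : MeasurableSpace Ω) {m0 : MeasurableSpace Ω}
    (P : Measure Ω) [IsProbabilityMeasure P] (h𝒢 : 𝒢 ≤ m0)
    (σ ε : Ω → ℝ) (hσ0 : ∀ ω, 0 ≤ σ ω)
    (hσmeas : Measurable[𝒢] σ) (hσ4 : Integrable (fun ω => σ ω ^ 4) P)
    (hσ2pos : 0 < ∫ ω, σ ω ^ 2 ∂P)
    (hεmeas : Measurable ε) (hεgauss : Measure.map ε P = gaussianReal 0 1)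
    (hindep : Indep (MeasurableSpace.comap ε inferInstance) 𝒢 P) :
    (∫ ω, σ ω ^ 4 * ε ω ^ 4 ∂P = 3 * ∫ ω, σ ω ^ 4 ∂P)
    ∧ (∫ ω, (σ ω * ε ω) ^ 4 ∂P) / (∫ ω, (σ ω * ε ω) ^ 2 ∂P) ^ 2
        = 3 + 3 * ((∫ ω, (σ ω ^ 2) ^ 2 ∂P - (∫ ω, σ ω ^ 2 ∂P) ^ 2)
            / (∫ ω, σ ω ^ 2 ∂P) ^ 2)
    ∧ (0 < ∫ ω, (σ ω ^ 2) ^ 2 ∂P - (∫ ω, σ ω ^ 2 ∂P) ^ 2 →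
        3 < (∫ ω, (σ ω * ε ω) ^ 4 ∂P) / (∫ ω, (σ ω * ε ω) ^ 2 ∂P) ^ 2) :=
  stmt2_general 𝒢 P h𝒢 σ ε hσmeas hσ2pos hεgauss hindep
end

section
/- Consider the GARCH log-price setup: (ε_n)_{n=1}^T i.i.d. standard normal on (Ω, F, ℙ), filtration F_n = σ(ε_1,…,ε_n), and predictable real processes (μ_n) and (σ_n) with σ_n > 0. Define Z_n := Π_{k=1}^n exp(−(μ_k/σ_k)ε_k − μ_k²/(2σ_k²)). If there are constants B ≥ 0 and ω > 0 such that |μ_k| ≤ B and σ_k² ≥ ω almost surely for all k, then E[Z_n²] ≤ exp(n B²/ω) < ∞ for every n ≤ T; in particular the density process (Z_n) is square-integrable. -/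
/-!
Write `Z_n = ∏_{k ≤ n} exp (a_k ε_k - a_k² / 2)` with the predictable `a_k = -μ_k / σ_k`, so that
`a_k² ≤ B² / ω₀`. Squaring one factor gives
`exp (2 a_k ε_k - (2 a_k)² / 2) · exp (a_k²)`; the first term has conditional mean one given
`F_{k-1}`, because `ε_k ∼ N(0, 1)` is independent of `F_{k-1}` and `E exp (t ε - t² / 2) = 1`.
Hence `E[Z_k²] ≤ exp (B² / ω₀) · E[Z_{k-1}²]`, and induction gives the bound.
-/

open MeasureTheory ProbabilityTheory Real Finset
open scoped NNReal ENNReal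

lemma lintegral_exp_mul_sub_gaussianReal (v : ℝ≥0) (t : ℝ) :
    ∫⁻ y, ENNReal.ofReal (exp (t * y - v * t ^ 2 / 2)) ∂gaussianReal 0 v = 1 := by
  have hmgf : ∫ y, exp (t * y) ∂gaussianReal 0 v = exp (v * t ^ 2 / 2) := by
    simpa [mgf] using congrFun (mgf_id_gaussianReal (μ := 0) (v := v)) t
  simp_rw [sub_eq_add_neg, exp_add]
  rw [← ofReal_integral_eq_lintegral_ofReal
      ((integrable_exp_mul_gaussianReal t).mul_const _) (.of_forall fun _ => by positivity),
    integral_mul_const, hmgf, ← exp_add, add_neg_cancel, exp_zero, ENNReal.ofReal_one]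

lemma lintegral_mul_exp_mul_sub_of_indep {Ω : Type*} {m m0 : MeasurableSpace Ω}
    {P : Measure Ω} [IsProbabilityMeasure P] {G : Ω → ℝ≥0∞} {a Y : Ω → ℝ}
    {v : ℝ≥0} (hG : Measurable[m] G) (ha : Measurable[m] a) (hY : Measurable Y) (hm : m ≤ m0)
    (hindep : Indep m (MeasurableSpace.comap Y inferInstance) P)
    (hYlaw : P.map Y = gaussianReal 0 v) :
    ∫⁻ ω, G ω * ENNReal.ofReal (exp (a ω * Y ω - v * a ω ^ 2 / 2)) ∂P = ∫⁻ ω, G ω ∂P := by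
  set W : Ω → ℝ≥0∞ × ℝ := fun ω => (G ω, a ω)
  have hWm : Measurable[m] W := hG.prodMk ha
  have hWY : IndepFun W Y P :=
    indep_of_indep_of_le_left (indep_of_indep_of_le_right hindep le_rfl) hWm.comap_le
  have hmap : P.map (fun ω => (W ω, Y ω)) = (P.map W).prod (P.map Y) :=
    (indepFun_iff_map_prod_eq_prod_map_map (hWm.mono hm le_rfl).aemeasurable
      hY.aemeasurable).mp hWY
  set g : (ℝ≥0∞ × ℝ) × ℝ → ℝ≥0∞ :=
    fun p => p.1.1 * ENNReal.ofReal (exp (p.1.2 * p.2 - v * p.1.2 ^ 2 / 2))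
  have hg : Measurable g := by fun_prop
  calc ∫⁻ ω, G ω * ENNReal.ofReal (exp (a ω * Y ω - v * a ω ^ 2 / 2)) ∂P
      = ∫⁻ p, g p ∂(P.map W).prod (P.map Y) := by
        rw [← hmap, lintegral_map hg ((hWm.mono hm le_rfl).prodMk hY)]
    _ = ∫⁻ w, w.1 ∂P.map W := by
        rw [lintegral_prod _ hg.aemeasurable, hYlaw]
        congr 1 with w
        simp only [g]
        rw [lintegral_const_mul _ (by fun_prop), lintegral_exp_mul_sub_gaussianReal, mul_one]
    _ = ∫⁻ ω, G ω ∂P := lintegral_map measurable_fst (hWm.mono hm le_rfl)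

lemma lintegral_sq_mul_exp_le {Ω : Type*} {m m0 : MeasurableSpace Ω}
    {P : Measure Ω} [IsProbabilityMeasure P] {X a Y : Ω → ℝ} {c : ℝ}
    (hX : Measurable[m] X) (ha : Measurable[m] a) (hY : Measurable Y) (hm : m ≤ m0)
    (hindep : Indep m (MeasurableSpace.comap Y inferInstance) P)
    (hYlaw : P.map Y = gaussianReal 0 1) (hac : ∀ᵐ ω ∂P, a ω ^ 2 ≤ c) :
    ∫⁻ ω, ENNReal.ofReal ((X ω * exp (a ω * Y ω - a ω ^ 2 / 2)) ^ 2) ∂P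
      ≤ ENNReal.ofReal (exp c) * ∫⁻ ω, ENNReal.ofReal (X ω ^ 2) ∂P := by
  have hsq : ∀ ω, (X ω * exp (a ω * Y ω - a ω ^ 2 / 2)) ^ 2
      = exp (a ω ^ 2) * (X ω ^ 2 * exp (2 * a ω * Y ω - (1 : ℝ≥0) * (2 * a ω) ^ 2 / 2)) := by
    intro ω
    rw [mul_pow, ← exp_nat_mul, mul_left_comm, ← exp_add]
    congr 2
    push_cast
    ring
  have hX2 : Measurable[m] fun ω => ENNReal.ofReal (X ω ^ 2) := by fun_prop
  calc ∫⁻ ω, ENNReal.ofReal ((X ω * exp (a ω * Y ω - a ω ^ 2 / 2)) ^ 2) ∂P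
      ≤ ∫⁻ ω, ENNReal.ofReal (exp c) * (ENNReal.ofReal (X ω ^ 2) *
          ENNReal.ofReal (exp (2 * a ω * Y ω - (1 : ℝ≥0) * (2 * a ω) ^ 2 / 2))) ∂P := by
        refine lintegral_mono_ae (hac.mono fun ω hω => ?_)
        rw [hsq, ← ENNReal.ofReal_mul (by positivity), ← ENNReal.ofReal_mul (by positivity)]
        gcongr
    _ = ENNReal.ofReal (exp c) * ∫⁻ ω, ENNReal.ofReal (X ω ^ 2) ∂P := by
        rw [lintegral_const_mul' _ _ ENNReal.ofReal_ne_top,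
          lintegral_mul_exp_mul_sub_of_indep hX2 (ha.const_mul 2) hY hm hindep hYlaw]

lemma measurable_prod_exp_mul_sub {Ω : Type*} {F : ℕ → MeasurableSpace Ω} (hFmono : Monotone F)
    {a Y : ℕ → Ω → ℝ} {N : ℕ} (hY : ∀ k ∈ Icc 1 N, Measurable[F k] (Y k))
    (ha : ∀ k ∈ Icc 1 N, Measurable[F (k - 1)] (a k)) {n : ℕ} (hn : n ≤ N) :
    Measurable[F n] fun ω => ∏ k ∈ Icc 1 n, exp (a k ω * Y k ω - a k ω ^ 2 / 2) := by
  refine Finset.measurable_prod _ fun k hkn => ?_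
  obtain ⟨hk1, hkn⟩ := mem_Icc.mp hkn
  have hkN : k ∈ Icc 1 N := mem_Icc.mpr ⟨hk1, hkn.trans hn⟩
  have hak := (ha k hkN).mono (hFmono (by omega : k - 1 ≤ n)) le_rfl
  have hYk := (hY k hkN).mono (hFmono hkn) le_rfl
  fun_prop

lemma lintegral_sq_prod_exp_le {Ω : Type*} {m0 : MeasurableSpace Ω}
    {P : Measure Ω} [IsProbabilityMeasure P] {F : ℕ → MeasurableSpace Ω}
    (hFmono : Monotone F) (hFle : ∀ n, F n ≤ m0) {a Y : ℕ → Ω → ℝ} {c : ℝ} {N : ℕ}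
    (hY : ∀ k ∈ Icc 1 N, Measurable[F k] (Y k))
    (ha : ∀ k ∈ Icc 1 N, Measurable[F (k - 1)] (a k))
    (hindep : ∀ k ∈ Icc 1 N, Indep (F (k - 1)) (MeasurableSpace.comap (Y k) inferInstance) P)
    (hYlaw : ∀ k ∈ Icc 1 N, P.map (Y k) = gaussianReal 0 1)
    (hac : ∀ k ∈ Icc 1 N, ∀ᵐ ω ∂P, a k ω ^ 2 ≤ c) {n : ℕ} (hn : n ≤ N) :
    ∫⁻ ω, ENNReal.ofReal ((∏ k ∈ Icc 1 n, exp (a k ω * Y k ω - a k ω ^ 2 / 2)) ^ 2) ∂P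
      ≤ ENNReal.ofReal (exp (n * c)) := by
  induction n with
  | zero => simp
  | succ n ih =>
    have hk : n + 1 ∈ Icc 1 N := mem_Icc.mpr ⟨n.succ_pos, hn⟩
    have hprod := measurable_prod_exp_mul_sub hFmono hY ha (n := n) (by omega)
    simp_rw [prod_Icc_succ_top (Nat.le_add_left 1 n)]
    calc _ ≤ ENNReal.ofReal (exp c) * ENNReal.ofReal (exp (n * c)) :=
          (lintegral_sq_mul_exp_le hprod (ha _ hk) ((hY _ hk).mono (hFle _) le_rfl) (hFle n)
            (hindep _ hk) (hYlaw _ hk) (hac _ hk)).trans (by gcongr; exact ih (by omega))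
      _ = ENNReal.ofReal (exp ((n + 1 : ℕ) * c)) := by
          rw [← ENNReal.ofReal_mul (by positivity), ← exp_add]
          congr 2
          push_cast
          ring

section NoiseFiltration

variable {Ω β : Type*} {m0 : MeasurableSpace Ω} [MeasurableSpace β] {ε : ℕ → Ω → β}

abbrev noiseFiltration (ε : ℕ → Ω → β) (n : ℕ) : MeasurableSpace Ω :=
  ⨆ k ∈ Icc 1 n, MeasurableSpace.comap (ε k) inferInstance

lemma monotone_noiseFiltration : Monotone (noiseFiltration ε) :=
  fun _ _ hnn' => biSup_mono fun _ hk => Icc_subset_Icc_right hnn' hk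

lemma noiseFiltration_le (hε : ∀ k, Measurable (ε k)) (n : ℕ) : noiseFiltration ε n ≤ m0 :=
  iSup₂_le fun k _ => (hε k).comap_le

lemma measurable_noiseFiltration {k : ℕ} (hk : 1 ≤ k) : Measurable[noiseFiltration ε k] (ε k) :=
  Measurable.of_comap_le (le_biSup (fun j => MeasurableSpace.comap (ε j) inferInstance)
    (right_mem_Icc.mpr hk))

lemma indep_noiseFiltration_comap_succ {P : Measure Ω} (hε : ∀ k, Measurable (ε k)) {T : ℕ}
    (hindep : iIndepFun (fun i : Fin T => ε (i.val + 1)) P) {n : ℕ} (hn : n < T) :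
    Indep (noiseFiltration ε n) (MeasurableSpace.comap (ε (n + 1)) inferInstance) P := by
  let s : Fin T → MeasurableSpace Ω := fun i => MeasurableSpace.comap (ε (i.val + 1)) inferInstance
  let t : Set (Fin T) := {i | i.val + 1 ≤ n}
  refine indep_of_indep_of_le_right (indep_of_indep_of_le_left
    (indep_biSup_compl (s := s) (fun i => (hε _).comap_le) hindep t) ?_) ?_
  · refine iSup₂_le fun k hk => ?_
    obtain ⟨hk1, hkn⟩ := mem_Icc.mp hk
    have hmem : (⟨k - 1, by omega⟩ : Fin T) ∈ t := show k - 1 + 1 ≤ n by omega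
    simpa only [s, Nat.sub_add_cancel hk1] using le_biSup s hmem
  · exact le_biSup s (show (⟨n, hn⟩ : Fin T) ∈ tᶜ from show ¬n + 1 ≤ n by omega)

end NoiseFiltration

lemma integral_sq_le_and_memLp_two {Ω : Type*} {m0 : MeasurableSpace Ω} {P : Measure Ω}
    {f : Ω → ℝ} (hf : AEStronglyMeasurable f P) {C : ℝ} (hC : 0 ≤ C)
    (h : ∫⁻ ω, ENNReal.ofReal (f ω ^ 2) ∂P ≤ ENNReal.ofReal C) :
    ∫ ω, f ω ^ 2 ∂P ≤ C ∧ MemLp f 2 P := by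
  have hnonneg : 0 ≤ᵐ[P] fun ω => f ω ^ 2 := .of_forall fun ω => sq_nonneg _
  have hf2 : AEStronglyMeasurable (fun ω => f ω ^ 2) P := hf.pow 2
  refine ⟨?_, (memLp_two_iff_integrable_sq hf).mpr ⟨hf2, ?_⟩⟩
  · rw [integral_eq_lintegral_of_nonneg_ae hnonneg hf2]
    exact ENNReal.toReal_le_of_le_ofReal hC h
  · rw [hasFiniteIntegral_iff_ofReal hnonneg]
    exact h.trans_lt ENNReal.ofReal_lt_top

theorem stmt6_general {Ω : Type*} {m0 : MeasurableSpace Ω}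
    (P : Measure Ω) [IsProbabilityMeasure P]
    (T : ℕ) (ε : ℕ → Ω → ℝ) (hεmeas : ∀ k, Measurable (ε k))
    (hεindep : iIndepFun (fun i : Fin T => ε (i.val + 1)) P)
    (hεgauss : ∀ k, 1 ≤ k → k ≤ T → Measure.map (ε k) P = gaussianReal 0 1)
    (F : ℕ → MeasurableSpace Ω)
    (hF : ∀ n, F n = ⨆ k ∈ Finset.Icc 1 n, MeasurableSpace.comap (ε k) inferInstance)
    (μ σ : ℕ → Ω → ℝ)
    (hμpred : ∀ k, 1 ≤ k → Measurable[F (k - 1)] (μ k))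
    (hσpred : ∀ k, 1 ≤ k → Measurable[F (k - 1)] (σ k))
    (B ω₀ : ℝ) (hω₀ : 0 < ω₀)
    (hbound : ∀ k, 1 ≤ k → k ≤ T → ∀ᵐ ω ∂P, |μ k ω| ≤ B ∧ ω₀ ≤ σ k ω ^ 2)
    (Z : ℕ → Ω → ℝ)
    (hZ : ∀ n ω, Z n ω = ∏ k ∈ Finset.Icc 1 n,
        Real.exp (-(μ k ω / σ k ω) * ε k ω - μ k ω ^ 2 / (2 * σ k ω ^ 2))) :
    ∀ n, n ≤ T →
      (∫ ω, Z n ω ^ 2 ∂P ≤ Real.exp (n * B ^ 2 / ω₀)) ∧ MemLp (Z n) 2 P := by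
  obtain rfl : F = noiseFiltration ε := funext hF
  have hεF : ∀ k ∈ Icc 1 T, Measurable[noiseFiltration ε k] (ε k) := fun k hk =>
    measurable_noiseFiltration (mem_Icc.mp hk).1
  set a : ℕ → Ω → ℝ := fun k ω => -(μ k ω / σ k ω)
  have hZa : ∀ n, Z n = fun ω => ∏ k ∈ Icc 1 n, exp (a k ω * ε k ω - a k ω ^ 2 / 2) := by
    refine fun n => funext fun ω => (hZ n ω).trans (prod_congr rfl fun k _ => ?_)
    simp only [a, neg_sq, div_pow, div_div, mul_comm (σ k ω ^ 2)]
  have ha : ∀ k ∈ Icc 1 T, Measurable[noiseFiltration ε (k - 1)] (a k) := fun k hk =>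
    ((hμpred k (mem_Icc.mp hk).1).div (hσpred k (mem_Icc.mp hk).1)).neg
  have hac : ∀ k ∈ Icc 1 T, ∀ᵐ ω ∂P, a k ω ^ 2 ≤ B ^ 2 / ω₀ := fun k hk =>
    (hbound k (mem_Icc.mp hk).1 (mem_Icc.mp hk).2).mono fun ω ⟨hμB, hσω⟩ => by
      rw [neg_sq, div_pow]
      exact div_le_div₀ (by positivity) (sq_le_sq' (abs_le.mp hμB).1 (abs_le.mp hμB).2) hω₀ hσω
  have hindep : ∀ k ∈ Icc 1 T, Indep (noiseFiltration ε (k - 1))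
      (MeasurableSpace.comap (ε k) inferInstance) P :=
    fun k hk => by
      obtain ⟨j, rfl⟩ := Nat.exists_eq_add_of_le' (mem_Icc.mp hk).1
      rw [Nat.add_sub_cancel]
      exact indep_noiseFiltration_comap_succ hεmeas hεindep (mem_Icc.mp hk).2
  intro n hn
  rw [hZa n]
  refine integral_sq_le_and_memLp_two
    ((measurable_prod_exp_mul_sub monotone_noiseFiltration hεF ha hn).mono
      (noiseFiltration_le hεmeas n) le_rfl).aestronglyMeasurable (exp_nonneg _) ?_
  rw [mul_div_assoc]
  exact lintegral_sq_prod_exp_le monotone_noiseFiltration (noiseFiltration_le hεmeas) hεF ha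
    hindep (fun k hk => hεgauss k (mem_Icc.mp hk).1 (mem_Icc.mp hk).2) hac hn

/-- In the GARCH log-price setup, if `|μ_k| ≤ B` and `σ_k² ≥ ω₀ > 0`
almost surely for all `k`, then the density process
`Z_n = Π_{k=1}^n exp(-(μ_k/σ_k)ε_k - μ_k²/(2σ_k²))` satisfies
`E[Z_n²] ≤ exp(nB²/ω₀) < ∞` for every `n ≤ T`; in particular it is square-integrable. -/
theorem stmt6 {Ω : Type*} {m0 : MeasurableSpace Ω}
    (P : Measure Ω) [IsProbabilityMeasure P]
    (T : ℕ) (ε : ℕ → Ω → ℝ) (hεmeas : ∀ k, Measurable (ε k))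
    (hεindep : iIndepFun (fun i : Fin T => ε (i.val + 1)) P)
    (hεgauss : ∀ k, 1 ≤ k → k ≤ T → Measure.map (ε k) P = gaussianReal 0 1)
    (F : ℕ → MeasurableSpace Ω)
    (hF : ∀ n, F n = ⨆ k ∈ Finset.Icc 1 n, MeasurableSpace.comap (ε k) inferInstance)
    (μ σ : ℕ → Ω → ℝ)
    (hμpred : ∀ k, 1 ≤ k → Measurable[F (k - 1)] (μ k))
    (hσpred : ∀ k, 1 ≤ k → Measurable[F (k - 1)] (σ k))
    (hσpos : ∀ k ω, 0 < σ k ω)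
    (B ω₀ : ℝ) (hB : 0 ≤ B) (hω₀ : 0 < ω₀)
    (hbound : ∀ k, 1 ≤ k → k ≤ T → ∀ᵐ ω ∂P, |μ k ω| ≤ B ∧ ω₀ ≤ σ k ω ^ 2)
    (Z : ℕ → Ω → ℝ)
    (hZ : ∀ n ω, Z n ω = ∏ k ∈ Finset.Icc 1 n,
        Real.exp (-(μ k ω / σ k ω) * ε k ω - μ k ω ^ 2 / (2 * σ k ω ^ 2))) :
    ∀ n, n ≤ T →
      (∫ ω, Z n ω ^ 2 ∂P ≤ Real.exp (n * B ^ 2 / ω₀)) ∧ MemLp (Z n) 2 P :=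
  stmt6_general (m0 := m0) P T ε hεmeas hεindep hεgauss F hF μ σ hμpred hσpred B ω₀ hω₀ hbound Z hZ
end

section
/- Consider the GARCH log-price setup: (ε_n)_{n=1}^T i.i.d. standard normal on (Ω, F, ℙ), filtration F_n = σ(ε_1,…,ε_n), predictable real processes (μ_n) and (σ_n) with σ_n > 0, Z_T := Π_{k=1}^T exp(−(μ_k/σ_k)ε_k − μ_k²/(2σ_k²)), and Q the probability measure with density Z_T with respect to ℙ. Then the random variables ε̃_n := ε_n + μ_n/σ_n, n = 1, …, T, are mutually independent under Q and each ε̃_n has the standard normal distribution N(0,1) under Q. -/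
open MeasureTheory ProbabilityTheory Real
open scoped ENNReal

/-!
Put `ξ k = ε (k + 1)` and `θ k = μ (k + 1) / σ (k + 1)`. Under `P`, `ξ k` is standard Gaussian and
independent of the σ-algebra `ℱ k` generated by the first `k` innovations, while `θ k` and the
first `k` factors of `Z` are `ℱ k`-measurable. For a standard Gaussian `X` and a constant `c`,
weighting by `exp (-c X - c² / 2)` and shifting `X` by `c` preserves `N(0,1)`, because the density
satisfies `φ x * exp (-c x - c² / 2) = φ (x + c)`. Peeling off the last factor of `Z` inductively,
`Q` gives every box `∏ s k` the mass `∏ N(0,1) (s k)` under `(ξ k + θ k)_{k < T}`: this vector has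
the product Gaussian law under `Q`, i.e. independent `N(0,1)` coordinates.
-/

lemma gaussianPDF_mul_ofReal_exp (c x : ℝ) :
    gaussianPDF 0 1 x * ENNReal.ofReal (exp (-c * x - c ^ 2 / 2)) = gaussianPDF 0 1 (x + c) := by
  rw [gaussianPDF, gaussianPDF, ← ENNReal.ofReal_mul (gaussianPDFReal_nonneg 0 1 x)]
  congr 1
  simp only [gaussianPDFReal, NNReal.coe_one, mul_one, sub_zero, mul_assoc, ← exp_add]
  ring_nf

lemma lintegral_gaussianReal_tilt (c : ℝ) {h : ℝ → ℝ≥0∞} (hh : Measurable h) :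
    ∫⁻ x, ENNReal.ofReal (exp (-c * x - c ^ 2 / 2)) * h (x + c) ∂gaussianReal 0 1
      = ∫⁻ x, h x ∂gaussianReal 0 1 := by
  rw [gaussianReal_of_var_ne_zero 0 one_ne_zero,
    lintegral_withDensity_eq_lintegral_mul _ (measurable_gaussianPDF 0 1) (by fun_prop),
    lintegral_withDensity_eq_lintegral_mul _ (measurable_gaussianPDF 0 1) hh]
  simp only [Pi.mul_apply, ← mul_assoc, gaussianPDF_mul_ofReal_exp]
  exact lintegral_add_right_eq_self (fun x => gaussianPDF 0 1 x * h x) c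

lemma lintegral_mul_tilt_of_indep {Ω : Type*} {G m0 : MeasurableSpace Ω} {P : Measure Ω}
    [IsFiniteMeasure P] {X c : Ω → ℝ} {W : Ω → ℝ≥0∞}
    (hG : G ≤ m0) (hX : Measurable X) (hXlaw : P.map X = gaussianReal 0 1)
    (hindep : Indep G (MeasurableSpace.comap X inferInstance) P)
    (hW : Measurable[G] W) (hc : Measurable[G] c) {h : ℝ → ℝ≥0∞} (hh : Measurable h) :
    ∫⁻ ω, W ω * (ENNReal.ofReal (exp (-c ω * X ω - c ω ^ 2 / 2)) * h (X ω + c ω)) ∂P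
      = (∫⁻ ω, W ω ∂P) * ∫⁻ x, h x ∂gaussianReal 0 1 := by
  have hWcG : Measurable[G] fun ω => (W ω, c ω) := hW.prodMk hc
  have hWc : Measurable fun ω => (W ω, c ω) := hWcG.mono hG le_rfl
  have hjoint : P.map (fun ω => ((W ω, c ω), X ω))
      = (P.map fun ω => (W ω, c ω)).prod (gaussianReal 0 1) := by
    rw [← hXlaw, ← indepFun_iff_map_prod_eq_prod_map_map hWc.aemeasurable hX.aemeasurable,
      IndepFun_iff_Indep]
    exact indep_of_indep_of_le_left hindep (measurable_iff_comap_le.mp hWcG)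
  have hg : Measurable fun p : (ℝ≥0∞ × ℝ) × ℝ =>
      p.1.1 * (ENNReal.ofReal (exp (-p.1.2 * p.2 - p.1.2 ^ 2 / 2)) * h (p.2 + p.1.2)) := by
    fun_prop
  calc ∫⁻ ω, W ω * (ENNReal.ofReal (exp (-c ω * X ω - c ω ^ 2 / 2)) * h (X ω + c ω)) ∂P
      = ∫⁻ w, ∫⁻ x, w.1 * (ENNReal.ofReal (exp (-w.2 * x - w.2 ^ 2 / 2)) * h (x + w.2))
          ∂gaussianReal 0 1 ∂(P.map fun ω => (W ω, c ω)) := by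
        rw [← lintegral_prod _ hg.aemeasurable, ← hjoint, lintegral_map hg (hWc.prodMk hX)]
    _ = ∫⁻ w, w.1 * ∫⁻ x, h x ∂gaussianReal 0 1 ∂(P.map fun ω => (W ω, c ω)) := by
        refine lintegral_congr fun w => ?_
        rw [lintegral_const_mul _ (by fun_prop), lintegral_gaussianReal_tilt w.2 hh]
    _ = (∫⁻ ω, W ω ∂P) * ∫⁻ x, h x ∂gaussianReal 0 1 := by
        rw [lintegral_mul_const _ measurable_fst, lintegral_map measurable_fst hWc]

lemma map_eval_eq_and_iIndepFun_of_map_eq_pi {Ω ι : Type*} {m0 : MeasurableSpace Ω} [Fintype ι]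
    {β : ι → Type*} [∀ i, MeasurableSpace (β i)] {Q : Measure Ω} {f : ∀ i, Ω → β i}
    (hf : ∀ i, Measurable (f i)) {ν : ∀ i, Measure (β i)} [∀ i, IsProbabilityMeasure (ν i)]
    (h : Q.map (fun ω i => f i ω) = Measure.pi ν) :
    (∀ i, Q.map (f i) = ν i) ∧ iIndepFun f Q := by
  have : IsProbabilityMeasure (Q.map fun ω i => f i ω) := h ▸ inferInstance
  have := Measure.isProbabilityMeasure_of_map (μ := Q) fun ω i => f i ω
  have hmarg (i : ι) : Q.map (f i) = ν i := by
    rw [← (measurePreserving_eval ν i).map_eq, ← h,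
      Measure.map_map (measurable_pi_apply i) (measurable_pi_lambda _ hf)]
    rfl
  refine ⟨hmarg, (iIndepFun_iff_map_fun_eq_pi_map fun i => (hf i).aemeasurable).2 ?_⟩
  simp_rw [hmarg]
  exact h

section Girsanov

variable {Ω : Type*} {m0 : MeasurableSpace Ω} {P : Measure Ω} [IsProbabilityMeasure P]
  {ℱ : Filtration ℕ m0} {ξ θ : ℕ → Ω → ℝ}

noncomputable def girsanovDensity (θ ξ : ℕ → Ω → ℝ) (n : ℕ) (ω : Ω) : ℝ≥0∞ :=
  ∏ k ∈ Finset.range n, ENNReal.ofReal (exp (-θ k ω * ξ k ω - θ k ω ^ 2 / 2))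

lemma girsanovDensity_succ (n : ℕ) (ω : Ω) :
    girsanovDensity θ ξ (n + 1) ω
      = girsanovDensity θ ξ n ω * ENNReal.ofReal (exp (-θ n ω * ξ n ω - θ n ω ^ 2 / 2)) :=
  Finset.prod_range_succ _ n

lemma measurable_girsanovDensity {m : MeasurableSpace Ω} {n : ℕ}
    (hξ : ∀ k < n, Measurable[m] (ξ k)) (hθ : ∀ k < n, Measurable[m] (θ k)) :
    Measurable[m] (girsanovDensity θ ξ n) := by
  refine Finset.measurable_prod _ fun k hk => ?_
  have := hξ k (Finset.mem_range.1 hk)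
  have := hθ k (Finset.mem_range.1 hk)
  fun_prop

lemma lintegral_girsanovDensity_mul_prod_indicator {n : ℕ}
    (hξ : ∀ k < n, Measurable[ℱ (k + 1)] (ξ k)) (hθ : ∀ k < n, Measurable[ℱ k] (θ k))
    (hindep : ∀ k < n, Indep (ℱ k) (MeasurableSpace.comap (ξ k) inferInstance) P)
    (hlaw : ∀ k < n, P.map (ξ k) = gaussianReal 0 1)
    {s : ℕ → Set ℝ} (hs : ∀ k, MeasurableSet (s k)) :
    ∫⁻ ω, girsanovDensity θ ξ n ω
        * ∏ k ∈ Finset.range n, (s k).indicator 1 (ξ k ω + θ k ω) ∂P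
      = ∏ k ∈ Finset.range n, gaussianReal 0 1 (s k) := by
  induction n with
  | zero => simp [girsanovDensity]
  | succ n ih =>
    have hξn : ∀ k < n, Measurable[ℱ n] (ξ k) := fun k hk =>
      (hξ k (by omega)).mono (ℱ.mono hk) le_rfl
    have hθn : ∀ k < n + 1, Measurable[ℱ n] (θ k) := fun k hk =>
      (hθ k hk).mono (ℱ.mono (by omega)) le_rfl
    have hW : Measurable[ℱ n] fun ω => girsanovDensity θ ξ n ω
        * ∏ k ∈ Finset.range n, (s k).indicator 1 (ξ k ω + θ k ω) := by
      refine (measurable_girsanovDensity hξn fun k hk => hθn k (by omega)).mul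
        (Finset.measurable_prod _ fun k hk => ?_)
      exact (measurable_const.indicator (hs k)).comp
        ((hξn k (Finset.mem_range.1 hk)).add (hθn k (by simp at hk; omega)))
    have hξ0 : Measurable (ξ n) := (hξ n (by omega)).mono (ℱ.le _) le_rfl
    simp only [girsanovDensity_succ, Finset.prod_range_succ,
      mul_mul_mul_comm _ (ENNReal.ofReal _)]
    rw [lintegral_mul_tilt_of_indep (ℱ.le n) hξ0 (hlaw n (by omega)) (hindep n (by omega)) hW
      (hθ n (by omega)) (h := (s n).indicator 1) (measurable_const.indicator (hs n)),
      ih (fun k hk => hξ k (by omega)) (fun k hk => hθ k (by omega))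
        (fun k hk => hindep k (by omega)) (fun k hk => hlaw k (by omega)),
      lintegral_indicator_one (hs n)]

lemma indicator_preimage_univ_pi_girsanovDensity {n : ℕ} {t : Fin n → Set ℝ} (ω : Ω) :
    ((fun ω (i : Fin n) => ξ i ω + θ i ω) ⁻¹' Set.univ.pi t).indicator
        (girsanovDensity θ ξ n) ω
      = girsanovDensity θ ξ n ω * ∏ k ∈ Finset.range n,
          (if h : k < n then t ⟨k, h⟩ else Set.univ).indicator 1 (ξ k ω + θ k ω) := by
  by_cases hω : ∀ i : Fin n, ξ i ω + θ i ω ∈ t i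
  · rw [Set.indicator_of_mem (by simpa using hω), Finset.prod_eq_one, mul_one]
    intro k hk
    rw [dif_pos (Finset.mem_range.1 hk)]
    exact Set.indicator_of_mem (hω ⟨k, _⟩) 1
  · obtain ⟨i, hi⟩ := not_forall.1 hω
    rw [Set.indicator_of_notMem (by simpa using ⟨i, hi⟩),
      Finset.prod_eq_zero (Finset.mem_range.2 i.2), mul_zero]
    simpa using hi

theorem map_withDensity_girsanovDensity {n : ℕ}
    (hξ : ∀ k < n, Measurable[ℱ (k + 1)] (ξ k)) (hθ : ∀ k < n, Measurable[ℱ k] (θ k))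
    (hindep : ∀ k < n, Indep (ℱ k) (MeasurableSpace.comap (ξ k) inferInstance) P)
    (hlaw : ∀ k < n, P.map (ξ k) = gaussianReal 0 1) :
    (P.withDensity (girsanovDensity θ ξ n)).map (fun ω (i : Fin n) => ξ i ω + θ i ω)
      = Measure.pi fun _ => gaussianReal 0 1 := by
  have hvec : Measurable fun ω (i : Fin n) => ξ i ω + θ i ω := measurable_pi_lambda _ fun i =>
    ((hξ i i.2).mono (ℱ.le _) le_rfl).add ((hθ i i.2).mono (ℱ.le _) le_rfl)
  refine (Measure.pi_eq fun t ht => ?_).symm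
  have hpre := hvec (MeasurableSet.univ_pi ht)
  rw [Measure.map_apply hvec (MeasurableSet.univ_pi ht), withDensity_apply _ hpre,
    ← lintegral_indicator hpre]
  simp_rw [indicator_preimage_univ_pi_girsanovDensity]
  rw [lintegral_girsanovDensity_mul_prod_indicator hξ hθ hindep hlaw,
    ← Fin.prod_univ_eq_prod_range]
  · simp
  · intro k
    split_ifs
    · exact ht _
    · exact MeasurableSet.univ

end Girsanov

section InnovationFiltration

variable {Ω : Type*} {m0 : MeasurableSpace Ω} {ε : ℕ → Ω → ℝ}

def innovationFiltration (ε : ℕ → Ω → ℝ) (hε : ∀ k, Measurable (ε k)) : Filtration ℕ m0 where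
  seq n := ⨆ k ∈ Finset.Icc 1 n, MeasurableSpace.comap (ε k) inferInstance
  mono' _ _ hab := iSup₂_mono' fun k hk =>
    ⟨k, Finset.Icc_subset_Icc_right hab hk, le_rfl⟩
  le' _ := iSup₂_le fun k _ => (hε k).comap_le

lemma comap_le_innovationFiltration (hε : ∀ k, Measurable (ε k)) {k n : ℕ}
    (hk : k ∈ Finset.Icc 1 n) :
    MeasurableSpace.comap (ε k) inferInstance ≤ innovationFiltration ε hε n :=
  le_iSup₂ (f := fun k (_ : k ∈ Finset.Icc 1 n) => MeasurableSpace.comap (ε k) inferInstance) k hk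

lemma indep_innovationFiltration {P : Measure Ω} (hε : ∀ k, Measurable (ε k)) {T : ℕ}
    (hindep : iIndepFun (fun i : Fin T => ε (i.val + 1)) P) {n : ℕ} (hn : n < T) :
    Indep (innovationFiltration ε hε n) (MeasurableSpace.comap (ε (n + 1)) inferInstance) P := by
  have hsplit := indep_iSup_of_disjoint (fun i => (hε _).comap_le) hindep.iIndep
    (S := {i : Fin T | i.val < n}) (T := {⟨n, hn⟩})
    (Set.disjoint_singleton_right.2 (lt_irrefl n))
  refine indep_of_indep_of_le hsplit (iSup₂_le fun k hk => ?_)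
    (le_iSup₂ (f := fun (i : Fin T) (_ : i ∈ ({⟨n, hn⟩} : Set (Fin T))) =>
      MeasurableSpace.comap (ε (i.val + 1)) inferInstance) ⟨n, hn⟩ rfl)
  obtain ⟨j, rfl⟩ : ∃ j, k = j + 1 := ⟨k - 1, by simp at hk; omega⟩
  exact le_iSup₂ (f := fun (i : Fin T) (_ : i ∈ {i : Fin T | i.val < n}) =>
    MeasurableSpace.comap (ε (i.val + 1)) inferInstance) ⟨j, by simp at hk; omega⟩
    (by simp at hk ⊢; omega)

end InnovationFiltration

theorem stmt8_general {Ω : Type*} {m0 : MeasurableSpace Ω}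
    (P : Measure Ω) [IsProbabilityMeasure P]
    (T : ℕ) (ε : ℕ → Ω → ℝ) (hεmeas : ∀ k, Measurable (ε k))
    (hεindep : iIndepFun (fun i : Fin T => ε (i.val + 1)) P)
    (hεgauss : ∀ k, 1 ≤ k → k ≤ T → Measure.map (ε k) P = gaussianReal 0 1)
    (F : ℕ → MeasurableSpace Ω)
    (hF : ∀ n, F n = ⨆ k ∈ Finset.Icc 1 n, MeasurableSpace.comap (ε k) inferInstance)
    (μ σ : ℕ → Ω → ℝ)
    (hμpred : ∀ k, 1 ≤ k → Measurable[F (k - 1)] (μ k))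
    (hσpred : ∀ k, 1 ≤ k → Measurable[F (k - 1)] (σ k))
    (Z : Ω → ℝ)
    (hZ : ∀ ω, Z ω = ∏ k ∈ Finset.Icc 1 T,
        Real.exp (-(μ k ω / σ k ω) * ε k ω - μ k ω ^ 2 / (2 * σ k ω ^ 2)))
    (Q : Measure Ω) (hQ : Q = P.withDensity fun ω => ENNReal.ofReal (Z ω)) :
    iIndepFun
      (fun i : Fin T => fun ω => ε (i.val + 1) ω + μ (i.val + 1) ω / σ (i.val + 1) ω) Q
    ∧ ∀ k, 1 ≤ k → k ≤ T →
        Measure.map (fun ω => ε k ω + μ k ω / σ k ω) Q = gaussianReal 0 1 := by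
  set ℱ := innovationFiltration ε hεmeas
  obtain rfl : F = ℱ := funext hF
  set ξ : ℕ → Ω → ℝ := fun k => ε (k + 1)
  set θ : ℕ → Ω → ℝ := fun k ω => μ (k + 1) ω / σ (k + 1) ω
  have hdensity : (fun ω => ENNReal.ofReal (Z ω)) = girsanovDensity θ ξ T := by
    ext ω
    rw [hZ, ENNReal.ofReal_prod_of_nonneg fun k _ => (exp_pos _).le, girsanovDensity,
      ← Finset.Ico_add_one_right_eq_Icc, Finset.prod_Ico_eq_prod_range, add_tsub_cancel_right]
    refine Finset.prod_congr rfl fun k _ => ?_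
    simp only [ξ, θ, add_comm 1 k]
    ring_nf
  have hθ : ∀ k < T, Measurable[ℱ k] (θ k) := fun k _ =>
    (hμpred (k + 1) le_add_self).div (hσpred (k + 1) le_add_self)
  have hmap :
      Q.map (fun ω (i : Fin T) => ξ i ω + θ i ω) = Measure.pi fun _ => gaussianReal 0 1 := by
    rw [hQ, hdensity]
    exact map_withDensity_girsanovDensity
      (fun k _ => measurable_iff_comap_le.2 (comap_le_innovationFiltration hεmeas (by simp))) hθ
      (fun k hk => indep_innovationFiltration hεmeas hεindep hk)
      (fun k hk => hεgauss (k + 1) le_add_self hk)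
  obtain ⟨hmarg, hind⟩ := map_eval_eq_and_iIndepFun_of_map_eq_pi
    (fun i : Fin T => (hεmeas _).add ((hθ i i.2).mono (ℱ.le _) le_rfl)) hmap
  refine ⟨hind, fun k hk1 hkT => ?_⟩
  obtain ⟨j, rfl⟩ : ∃ j, k = j + 1 := ⟨k - 1, by omega⟩
  exact hmarg ⟨j, by omega⟩

/-- (Girsanov for GARCH with Gaussian innovations.) In the GARCH
log-price setup, under the measure `Q` with density
`Z_T = Π_{k=1}^T exp(-(μ_k/σ_k)ε_k - μ_k²/(2σ_k²))` with respect to `P`, the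
risk-neutralized innovations `ε̃_n = ε_n + μ_n/σ_n`, `n = 1,…,T`, are mutually
independent and each is standard normal `N(0,1)` under `Q`. -/
theorem stmt8 {Ω : Type*} {m0 : MeasurableSpace Ω}
    (P : Measure Ω) [IsProbabilityMeasure P]
    (T : ℕ) (ε : ℕ → Ω → ℝ) (hεmeas : ∀ k, Measurable (ε k))
    (hεindep : iIndepFun (fun i : Fin T => ε (i.val + 1)) P)
    (hεgauss : ∀ k, 1 ≤ k → k ≤ T → Measure.map (ε k) P = gaussianReal 0 1)
    (F : ℕ → MeasurableSpace Ω)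
    (hF : ∀ n, F n = ⨆ k ∈ Finset.Icc 1 n, MeasurableSpace.comap (ε k) inferInstance)
    (μ σ : ℕ → Ω → ℝ)
    (hμpred : ∀ k, 1 ≤ k → Measurable[F (k - 1)] (μ k))
    (hσpred : ∀ k, 1 ≤ k → Measurable[F (k - 1)] (σ k))
    (hσpos : ∀ k ω, 0 < σ k ω)
    (Z : Ω → ℝ)
    (hZ : ∀ ω, Z ω = ∏ k ∈ Finset.Icc 1 T,
        Real.exp (-(μ k ω / σ k ω) * ε k ω - μ k ω ^ 2 / (2 * σ k ω ^ 2)))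
    (Q : Measure Ω) (hQ : Q = P.withDensity fun ω => ENNReal.ofReal (Z ω)) :
    iIndepFun
      (fun i : Fin T => fun ω => ε (i.val + 1) ω + μ (i.val + 1) ω / σ (i.val + 1) ω) Q
    ∧ ∀ k, 1 ≤ k → k ≤ T →
        Measure.map (fun ω => ε k ω + μ k ω / σ k ω) Q = gaussianReal 0 1 :=
  stmt8_general (m0 := m0) P T ε hεmeas hεindep hεgauss F hF μ σ hμpred hσpred Z hZ Q hQ
end

section
/- Consider the GARCH log-price setup with constant drift: (ε_n)_{n=1}^T i.i.d. standard normal on (Ω, F, ℙ), filtration F_n = σ(ε_1,…,ε_n), a predictable volatility process (σ_n) with σ_n² ≥ ω > 0 almost surely, and h ∈ L²(Ω, F_T, ℙ). Define F, G : ℝ → ℝ by F(μ) := E[h · Π_{j=1}^T (1 − (μ/σ_j)ε_j)] and G(μ) := E[h · Π_{j=1}^T exp(−(μ/σ_j)ε_j − μ²/(2σ_j²))]. Then F and G are differentiable at μ = 0 with F(0) = G(0) = E[h] and F'(0) = G'(0) = −Σ_{j=1}^T E[h ε_j/σ_j]; i.e. the linear Taylor expansions at μ = 0 of F and G coincide.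 -/
/-!
Both valuations have the form `μ ↦ E[h ∏ⱼ fⱼ(μ)]` with `fⱼ(0) = 1` and `fⱼ'(0) = -εⱼ/σⱼ`, so the
product rule gives the same derivative `-∑ⱼ E[h εⱼ/σⱼ]` at `μ = 0`, provided one may differentiate
under the integral. For `|μ| ≤ 1` every factor and its derivative is at most
`(1 + c²) exp (2c|εⱼ|)` with `c = ω₀^{-1/2}`, and `|h| exp (2c ∑ⱼ |εⱼ|)` is integrable since
`h ∈ L²` and, by independence, `exp (4c ∑ⱼ |εⱼ|)` has finite mean as a product of Gaussian
exponential moments.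
-/

open MeasureTheory ProbabilityTheory Real Finset

section ProductRule

variable {ι : Type*} [DecidableEq ι] {s : Finset ι}

lemma abs_prod_erase_mul_le {a b B : ι → ℝ} {i : ι} (hi : i ∈ s)
    (ha : ∀ j ∈ s, |a j| ≤ B j) (hb : |b i| ≤ B i) :
    |(∏ j ∈ s.erase i, a j) * b i| ≤ ∏ j ∈ s, B j := by
  have ha' : ∀ j ∈ s.erase i, |a j| ≤ B j := fun j hj => ha j (mem_of_mem_erase hj)
  rw [abs_mul, abs_prod, ← prod_erase_mul s B hi]
  exact mul_le_mul (prod_le_prod (fun _ _ => abs_nonneg _) ha') hb (abs_nonneg _)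
    (prod_nonneg fun j hj => (abs_nonneg _).trans (ha' j hj))

lemma abs_sum_prod_erase_mul_le {a b B : ι → ℝ} (ha : ∀ j ∈ s, |a j| ≤ B j)
    (hb : ∀ j ∈ s, |b j| ≤ B j) :
    |∑ i ∈ s, (∏ j ∈ s.erase i, a j) * b i| ≤ #s * ∏ j ∈ s, B j :=
  calc |∑ i ∈ s, (∏ j ∈ s.erase i, a j) * b i|
      ≤ ∑ i ∈ s, |(∏ j ∈ s.erase i, a j) * b i| := abs_sum_le_sum_abs _ _
    _ ≤ ∑ _i ∈ s, ∏ j ∈ s, B j := sum_le_sum fun i hi => abs_prod_erase_mul_le hi ha (hb i hi)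
    _ = #s * ∏ j ∈ s, B j := by rw [sum_const, nsmul_eq_mul]

variable {Ω : Type*} [MeasurableSpace Ω] {P : Measure Ω}

theorem hasDerivAt_integral_mul_prod {h : Ω → ℝ} {f f' : ι → ℝ → Ω → ℝ} {B : ι → Ω → ℝ}
    {x₀ r : ℝ} (hr : 0 < r) (hh : Integrable h P)
    (hf_meas : ∀ x, ∀ j ∈ s, AEStronglyMeasurable (f j x) P)
    (hf'_meas : ∀ j ∈ s, AEStronglyMeasurable (f' j x₀) P)
    (hf₀ : ∀ j ∈ s, ∀ ω, f j x₀ ω = 1)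
    (hB : Integrable (fun ω => |h ω| * ∏ j ∈ s, B j ω) P)
    (hf_le : ∀ᵐ ω ∂P, ∀ x ∈ Metric.ball x₀ r, ∀ j ∈ s, |f j x ω| ≤ B j ω ∧ |f' j x ω| ≤ B j ω)
    (hf_deriv : ∀ᵐ ω ∂P, ∀ x ∈ Metric.ball x₀ r, ∀ j ∈ s,
      HasDerivAt (f j · ω) (f' j x ω) x) :
    HasDerivAt (fun x => ∫ ω, h ω * ∏ j ∈ s, f j x ω ∂P)
      (∑ j ∈ s, ∫ ω, h ω * f' j x₀ ω ∂P) x₀ := by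
  have hx₀ := Metric.mem_ball_self hr (x := x₀)
  have hterm : ∀ i ∈ s, Integrable (fun ω => h ω * f' i x₀ ω) P := by
    intro i hi
    refine hB.mono' (hh.aestronglyMeasurable.mul (hf'_meas i hi)) ?_
    filter_upwards [hf_le] with ω hω
    have hi_le := abs_prod_erase_mul_le (b := (f' · x₀ ω)) hi (fun j hj => (hω x₀ hx₀ j hj).1)
      (hω x₀ hx₀ i hi).2
    rw [prod_eq_one fun j hj => hf₀ j (mem_of_mem_erase hj) ω, one_mul] at hi_le
    rw [norm_eq_abs, abs_mul]
    exact mul_le_mul_of_nonneg_left hi_le (abs_nonneg _)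
  have hF'₀ : (fun ω => h ω * ∑ i ∈ s, (∏ j ∈ s.erase i, f j x₀ ω) * f' i x₀ ω)
      = fun ω => ∑ i ∈ s, h ω * f' i x₀ ω := by
    ext ω
    rw [mul_sum]
    refine sum_congr rfl fun i hi => ?_
    rw [prod_eq_one fun j hj => hf₀ j (mem_of_mem_erase hj) ω, one_mul]
  have hdom := hasDerivAt_integral_of_dominated_loc_of_deriv_le (Metric.ball_mem_nhds x₀ hr)
    (F := fun x ω => h ω * ∏ j ∈ s, f j x ω)
    (F' := fun x ω => h ω * ∑ i ∈ s, (∏ j ∈ s.erase i, f j x ω) * f' i x ω)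
    (bound := fun ω => #s * (|h ω| * ∏ j ∈ s, B j ω))
    (.of_forall fun x => hh.aestronglyMeasurable.mul (s.aestronglyMeasurable_fun_prod (hf_meas x)))
    (hh.congr (.of_forall fun ω => by simp [prod_eq_one fun j hj => hf₀ j hj ω]))
    (hF'₀ ▸ (integrable_finsetSum s hterm).aestronglyMeasurable)
    (by
      filter_upwards [hf_le] with ω hω x hx
      rw [norm_eq_abs, abs_mul, mul_left_comm]
      exact mul_le_mul_of_nonneg_left (abs_sum_prod_erase_mul_le (fun j hj => (hω x hx j hj).1)
        fun j hj => (hω x hx j hj).2) (abs_nonneg _))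
    (hB.const_mul _)
    (by
      filter_upwards [hf_deriv] with ω hω x hx
      exact (HasDerivAt.fun_finsetProd (hω x hx)).const_mul (h ω))
  rw [← integral_finsetSum s hterm]
  exact hF'₀ ▸ hdom.2

end ProductRule

/-- For `|μ| ≤ 1` and `|σ|⁻¹ ≤ c`, this bounds both factors `1 - μ / σ * e` and
`exp (-(μ / σ) * e - μ ^ 2 / (2 * σ ^ 2))` together with their `μ`-derivatives. -/
noncomputable def factorBound (c e : ℝ) : ℝ := (1 + c ^ 2) * exp (2 * (c * |e|))

section FactorBounds

variable {c σ x e : ℝ}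

lemma nonneg_of_inv_abs_le (hσ : |σ|⁻¹ ≤ c) : 0 ≤ c :=
  (inv_nonneg.2 (abs_nonneg σ)).trans hσ

lemma exp_mul_le_factorBound (hc : 0 ≤ c) :
    exp (c * |e|) * (1 + c * |e| + c ^ 2) ≤ factorBound c e := by
  set y := c * |e|
  have hy : 0 ≤ y := by positivity
  have hy1 : 1 + y ≤ exp y := by linarith [add_one_le_exp y]
  calc exp y * (1 + y + c ^ 2) ≤ exp y * ((1 + c ^ 2) * (1 + y)) := by
        gcongr; nlinarith [mul_nonneg (sq_nonneg c) hy]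
    _ ≤ exp y * ((1 + c ^ 2) * exp y) := by gcongr
    _ = factorBound c e := by rw [factorBound, two_mul, exp_add]; ring

lemma add_le_factorBound (hc : 0 ≤ c) : 1 + c * |e| + c ^ 2 ≤ factorBound c e :=
  (le_mul_of_one_le_left (by positivity) (one_le_exp (by positivity))).trans
    (exp_mul_le_factorBound hc)

lemma abs_div_le_mul_abs (hσ : |σ|⁻¹ ≤ c) : |e / σ| ≤ c * |e| := by
  rw [abs_div, div_eq_inv_mul]
  exact mul_le_mul_of_nonneg_right hσ (abs_nonneg e)

lemma abs_div_mul_le (hσ : |σ|⁻¹ ≤ c) (hx : |x| ≤ 1) : |x / σ * e| ≤ c * |e| :=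
  calc |x / σ * e| = |x| * |e / σ| := by rw [← abs_mul]; ring_nf
    _ ≤ 1 * (c * |e|) := mul_le_mul hx (abs_div_le_mul_abs hσ) (abs_nonneg _) zero_le_one
    _ = c * |e| := one_mul _

lemma abs_one_sub_div_mul_le_factorBound (hσ : |σ|⁻¹ ≤ c) (hx : |x| ≤ 1) :
    |1 - x / σ * e| ≤ factorBound c e := by
  have hc := nonneg_of_inv_abs_le hσ
  calc |1 - x / σ * e| ≤ |1| + |x / σ * e| := abs_sub _ _
    _ ≤ 1 + c * |e| + c ^ 2 := by
        rw [abs_one]; linarith [abs_div_mul_le (e := e) hσ hx, sq_nonneg c]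
    _ ≤ factorBound c e := add_le_factorBound hc

lemma abs_neg_div_le_factorBound (hσ : |σ|⁻¹ ≤ c) : |-(e / σ)| ≤ factorBound c e := by
  have hc := nonneg_of_inv_abs_le hσ
  rw [abs_neg]
  linarith [abs_div_le_mul_abs (e := e) hσ, add_le_factorBound (e := e) hc, sq_nonneg c]

lemma exp_girsanov_le (hσ : |σ|⁻¹ ≤ c) (hx : |x| ≤ 1) :
    exp (-(x / σ) * e - x ^ 2 / (2 * σ ^ 2)) ≤ exp (c * |e|) := by
  have hquad : 0 ≤ x ^ 2 / (2 * σ ^ 2) := by positivity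
  gcongr
  nlinarith [neg_abs_le (x / σ * e), abs_div_mul_le (e := e) hσ hx]

lemma abs_exp_girsanov_le_factorBound (hσ : |σ|⁻¹ ≤ c) (hx : |x| ≤ 1) :
    |exp (-(x / σ) * e - x ^ 2 / (2 * σ ^ 2))| ≤ factorBound c e := by
  have hc := nonneg_of_inv_abs_le hσ
  rw [abs_of_pos (exp_pos _)]
  have hone : 1 ≤ 1 + c * |e| + c ^ 2 := by nlinarith [sq_nonneg c, mul_nonneg hc (abs_nonneg e)]
  calc exp (-(x / σ) * e - x ^ 2 / (2 * σ ^ 2)) ≤ exp (c * |e|) := exp_girsanov_le hσ hx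
    _ ≤ exp (c * |e|) * (1 + c * |e| + c ^ 2) := le_mul_of_one_le_right (exp_pos _).le hone
    _ ≤ factorBound c e := exp_mul_le_factorBound hc

lemma abs_exp_girsanov_mul_le_factorBound (hσ : |σ|⁻¹ ≤ c) (hx : |x| ≤ 1) :
    |exp (-(x / σ) * e - x ^ 2 / (2 * σ ^ 2)) * (-(e / σ) - x / σ ^ 2)| ≤ factorBound c e := by
  have hc := nonneg_of_inv_abs_le hσ
  have h1 := abs_div_le_mul_abs (e := e) hσ
  have h2 : |x / σ ^ 2| ≤ c ^ 2 := by
    rw [abs_div, abs_pow, div_eq_mul_inv, ← inv_pow]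
    calc |x| * (|σ|⁻¹) ^ 2 ≤ 1 * c ^ 2 := by gcongr
      _ = c ^ 2 := one_mul _
  calc |exp (-(x / σ) * e - x ^ 2 / (2 * σ ^ 2)) * (-(e / σ) - x / σ ^ 2)|
      ≤ exp (c * |e|) * (1 + c * |e| + c ^ 2) := by
        rw [abs_mul, abs_of_pos (exp_pos _)]
        refine mul_le_mul (exp_girsanov_le hσ hx) ?_ (abs_nonneg _) (exp_pos _).le
        linarith [abs_sub (-(e / σ)) (x / σ ^ 2), abs_neg (e / σ)]
    _ ≤ factorBound c e := exp_mul_le_factorBound hc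

lemma hasDerivAt_exp_girsanov (σ e x : ℝ) :
    HasDerivAt (fun μ => exp (-(μ / σ) * e - μ ^ 2 / (2 * σ ^ 2)))
      (exp (-(x / σ) * e - x ^ 2 / (2 * σ ^ 2)) * (-(e / σ) - x / σ ^ 2)) x := by
  have h : HasDerivAt (fun μ => -(μ / σ) * e - μ ^ 2 / (2 * σ ^ 2)) (-(e / σ) - x / σ ^ 2) x := by
    refine ((((hasDerivAt_id' x).div_const σ).fun_neg.mul_const e).fun_sub
      ((hasDerivAt_pow 2 x).div_const (2 * σ ^ 2))).congr_deriv ?_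
    push_cast; ring
  exact h.exp

end FactorBounds

section Integrability

variable {Ω : Type*} [MeasurableSpace Ω] {P : Measure Ω}

lemma integrable_exp_mul_of_map_eq_gaussianReal [IsProbabilityMeasure P] {X : Ω → ℝ} {m : ℝ}
    {v : NNReal} (hX : P.map X = gaussianReal m v) (t : ℝ) :
    Integrable (fun ω => exp (t * X ω)) P :=
  mgf_pos_iff.1 (by rw [mgf_gaussianReal hX]; positivity)

lemma ProbabilityTheory.iIndepFun.integrable_exp_mul_sum_abs [IsFiniteMeasure P] {ι : Type*}
    {X : ι → Ω → ℝ} (hindep : iIndepFun X P) (hmeas : ∀ i, Measurable (X i)) {s : Finset ι}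
    (hint : ∀ i ∈ s, ∀ t, Integrable (fun ω => exp (t * X i ω)) P) (t : ℝ) :
    Integrable (fun ω => exp (t * ∑ i ∈ s, |X i ω|)) P := by
  simpa only [Finset.sum_apply, Function.comp_apply] using
    (hindep.comp (fun _ => abs) fun _ => measurable_abs).integrable_exp_mul_sum
      (fun i => (hmeas i).abs) fun i hi => integrable_exp_mul_abs (hint i hi t) (hint i hi (-t))

lemma integrable_exp_mul_sum_abs_of_gaussian [IsProbabilityMeasure P] {T : ℕ} {ε : ℕ → Ω → ℝ}
    (hεmeas : ∀ k, Measurable (ε k)) (hεindep : iIndepFun (fun i : Fin T => ε (i.val + 1)) P)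
    (hεgauss : ∀ k, 1 ≤ k → k ≤ T → P.map (ε k) = gaussianReal 0 1) (t : ℝ) :
    Integrable (fun ω => exp (t * ∑ j ∈ Icc 1 T, |ε j ω|)) P := by
  have hsum : ∀ ω, ∑ i : Fin T, |ε (i.val + 1) ω| = ∑ j ∈ Icc 1 T, |ε j ω| := fun ω => by
    rw [Fin.sum_univ_eq_sum_range (fun i => |ε (i + 1) ω|), range_eq_Ico,
      sum_Ico_add' (fun j => |ε j ω|)]
    rfl
  simpa only [hsum] using hεindep.integrable_exp_mul_sum_abs (s := univ) (fun i => hεmeas _)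
    (fun i _ => integrable_exp_mul_of_map_eq_gaussianReal (hεgauss _ (by omega) i.isLt)) t

lemma prod_factorBound {ι : Type*} (s : Finset ι) (c : ℝ) (e : ι → ℝ) :
    ∏ j ∈ s, factorBound c (e j) = (1 + c ^ 2) ^ #s * exp (2 * c * ∑ j ∈ s, |e j|) := by
  simp only [factorBound, prod_mul_distrib, prod_const, ← exp_sum, mul_sum, mul_assoc]

lemma integrable_abs_mul_prod_factorBound [IsProbabilityMeasure P] {T : ℕ} {ε : ℕ → Ω → ℝ}
    (hεmeas : ∀ k, Measurable (ε k)) (hεindep : iIndepFun (fun i : Fin T => ε (i.val + 1)) P)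
    (hεgauss : ∀ k, 1 ≤ k → k ≤ T → P.map (ε k) = gaussianReal 0 1) {h : Ω → ℝ}
    (hh : MemLp h 2 P) (c : ℝ) :
    Integrable (fun ω => |h ω| * ∏ j ∈ Icc 1 T, factorBound c (ε j ω)) P := by
  have hexp : MemLp (fun ω => exp (2 * c * ∑ j ∈ Icc 1 T, |ε j ω|)) 2 P := by
    refine (memLp_two_iff_integrable_sq (Measurable.aestronglyMeasurable (by fun_prop))).2 ?_
    refine (integrable_exp_mul_sum_abs_of_gaussian hεmeas hεindep hεgauss (4 * c)).congr
      (.of_forall fun ω => ?_)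
    simp only [← exp_nat_mul]
    ring_nf
  refine ((hh.abs.integrable_mul hexp).const_mul ((1 + c ^ 2) ^ #(Icc 1 T))).congr
    (.of_forall fun ω => ?_)
  simp only [prod_factorBound, Pi.mul_apply, Pi.abs_apply]
  ring

end Integrability

section Valuation

variable {Ω ι : Type*} [MeasurableSpace Ω] {P : Measure Ω} [DecidableEq ι] {s : Finset ι}
  {ε σ : ι → Ω → ℝ} {h : Ω → ℝ} {c : ℝ}

theorem hasDerivAt_integral_mul_prod_one_sub (hh : Integrable h P)
    (hε : ∀ j ∈ s, Measurable (ε j)) (hσ : ∀ j ∈ s, Measurable (σ j))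
    (hσc : ∀ᵐ ω ∂P, ∀ j ∈ s, |σ j ω|⁻¹ ≤ c)
    (hB : Integrable (fun ω => |h ω| * ∏ j ∈ s, factorBound c (ε j ω)) P) :
    HasDerivAt (fun μ => ∫ ω, h ω * ∏ j ∈ s, (1 - μ / σ j ω * ε j ω) ∂P)
      (-∑ j ∈ s, ∫ ω, h ω * (ε j ω / σ j ω) ∂P) 0 := by
  have key := hasDerivAt_integral_mul_prod (f := fun j x ω => 1 - x / σ j ω * ε j ω)
    (f' := fun j _ ω => -(ε j ω / σ j ω)) (x₀ := 0) one_pos hh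
    (fun x j hj => Measurable.aestronglyMeasurable <| by
      have := hσ j hj; have := hε j hj; fun_prop)
    (fun j hj => Measurable.aestronglyMeasurable <| by
      have := hσ j hj; have := hε j hj; fun_prop)
    (fun j _ ω => by simp) hB
    (by
      filter_upwards [hσc] with ω hω x hx j hj
      have hx1 : |x| ≤ 1 := (mem_ball_zero_iff.1 hx).le
      exact ⟨abs_one_sub_div_mul_le_factorBound (hω j hj) hx1,
        abs_neg_div_le_factorBound (hω j hj)⟩)
    (.of_forall fun ω x _ j _ =>
      (((hasDerivAt_id' x).div_const _).mul_const _).const_sub 1 |>.congr_deriv (by ring))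
  simpa only [mul_neg, integral_neg, sum_neg_distrib] using key

theorem hasDerivAt_integral_mul_prod_exp_girsanov (hh : Integrable h P)
    (hε : ∀ j ∈ s, Measurable (ε j)) (hσ : ∀ j ∈ s, Measurable (σ j))
    (hσc : ∀ᵐ ω ∂P, ∀ j ∈ s, |σ j ω|⁻¹ ≤ c)
    (hB : Integrable (fun ω => |h ω| * ∏ j ∈ s, factorBound c (ε j ω)) P) :
    HasDerivAt (fun μ => ∫ ω, h ω * ∏ j ∈ s,
        exp (-(μ / σ j ω) * ε j ω - μ ^ 2 / (2 * σ j ω ^ 2)) ∂P)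
      (-∑ j ∈ s, ∫ ω, h ω * (ε j ω / σ j ω) ∂P) 0 := by
  have key := hasDerivAt_integral_mul_prod
    (f := fun j x ω => exp (-(x / σ j ω) * ε j ω - x ^ 2 / (2 * σ j ω ^ 2)))
    (f' := fun j x ω => exp (-(x / σ j ω) * ε j ω - x ^ 2 / (2 * σ j ω ^ 2))
      * (-(ε j ω / σ j ω) - x / σ j ω ^ 2)) (x₀ := 0) one_pos hh
    (fun x j hj => Measurable.aestronglyMeasurable <| by
      have := hσ j hj; have := hε j hj; fun_prop)
    (fun j hj => Measurable.aestronglyMeasurable <| by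
      have := hσ j hj; have := hε j hj; fun_prop)
    (fun j _ ω => by simp) hB
    (by
      filter_upwards [hσc] with ω hω x hx j hj
      have hx1 : |x| ≤ 1 := (mem_ball_zero_iff.1 hx).le
      exact ⟨abs_exp_girsanov_le_factorBound (hω j hj) hx1,
        abs_exp_girsanov_mul_le_factorBound (hω j hj) hx1⟩)
    (.of_forall fun ω x _ j _ => hasDerivAt_exp_girsanov _ _ x)
  simpa [integral_neg] using key

end Valuation

lemma inv_abs_le_inv_sqrt {ω₀ σ : ℝ} (hω₀ : 0 < ω₀) (hσ : ω₀ ≤ σ ^ 2) : |σ|⁻¹ ≤ (√ω₀)⁻¹ :=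
  inv_anti₀ (sqrt_pos.2 hω₀) (sqrt_sq_eq_abs σ ▸ sqrt_le_sqrt hσ)

theorem stmt15_general {Ω : Type*} {m0 : MeasurableSpace Ω}
    (P : Measure Ω) [IsProbabilityMeasure P]
    (T : ℕ) (ε : ℕ → Ω → ℝ) (hεmeas : ∀ k, Measurable (ε k))
    (hεindep : iIndepFun (fun i : Fin T => ε (i.val + 1)) P)
    (hεgauss : ∀ k, 1 ≤ k → k ≤ T → Measure.map (ε k) P = gaussianReal 0 1)
    (F : ℕ → MeasurableSpace Ω)
    (hF : ∀ n, F n = ⨆ k ∈ Finset.Icc 1 n, MeasurableSpace.comap (ε k) inferInstance)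
    (σ : ℕ → Ω → ℝ)
    (hσpred : ∀ k, 1 ≤ k → Measurable[F (k - 1)] (σ k))
    (ω₀ : ℝ) (hω₀ : 0 < ω₀)
    (hσlb : ∀ k, 1 ≤ k → k ≤ T → ∀ᵐ ω ∂P, ω₀ ≤ σ k ω ^ 2)
    (h : Ω → ℝ) (hhL2 : MemLp h 2 P)
    (Fq Gq : ℝ → ℝ)
    (hFq : ∀ μ : ℝ, Fq μ = ∫ ω, h ω * ∏ j ∈ Finset.Icc 1 T,
        (1 - μ / σ j ω * ε j ω) ∂P)
    (hGq : ∀ μ : ℝ, Gq μ = ∫ ω, h ω * ∏ j ∈ Finset.Icc 1 T,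
        Real.exp (-(μ / σ j ω) * ε j ω - μ ^ 2 / (2 * σ j ω ^ 2)) ∂P) :
    Fq 0 = ∫ ω, h ω ∂P ∧ Gq 0 = ∫ ω, h ω ∂P
    ∧ HasDerivAt Fq (-∑ j ∈ Finset.Icc 1 T, ∫ ω, h ω * (ε j ω / σ j ω) ∂P) 0
    ∧ HasDerivAt Gq (-∑ j ∈ Finset.Icc 1 T, ∫ ω, h ω * (ε j ω / σ j ω) ∂P) 0 := by
  have hσmeas : ∀ j ∈ Icc 1 T, Measurable (σ j) := fun j hj =>
    (hσpred j (mem_Icc.1 hj).1).mono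
      (by rw [hF]; exact iSup₂_le fun k _ => (hεmeas k).comap_le) le_rfl
  have hσc : ∀ᵐ ω ∂P, ∀ j ∈ Icc 1 T, |σ j ω|⁻¹ ≤ (√ω₀)⁻¹ :=
    (Filter.eventually_all_finset _).2 fun j hj =>
      (hσlb j (mem_Icc.1 hj).1 (mem_Icc.1 hj).2).mono fun ω => inv_abs_le_inv_sqrt hω₀
  have hh := hhL2.integrable one_le_two
  have hB := integrable_abs_mul_prod_factorBound hεmeas hεindep hεgauss hhL2 (√ω₀)⁻¹
  refine ⟨by simp [hFq], by simp [hGq], ?_, ?_⟩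
  · rw [show Fq = _ from funext hFq]
    exact hasDerivAt_integral_mul_prod_one_sub hh (fun j _ => hεmeas j) hσmeas hσc hB
  · rw [show Gq = _ from funext hGq]
    exact hasDerivAt_integral_mul_prod_exp_girsanov hh (fun j _ => hεmeas j) hσmeas hσc hB

/-- (First-order agreement of physical and martingale valuations.)
In the GARCH log-price setup with constant drift, for a payoff `h ∈ L²(Ω, F_T, P)` let
`Fq(μ) = E[h·Π_{j=1}^T (1 - (μ/σ_j)ε_j)]` (value process under the physical measure) and
`Gq(μ) = E[h·Π_{j=1}^T exp(-(μ/σ_j)ε_j - μ²/(2σ_j²))]` (value under the Girsanov-type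
martingale measure). Then `Fq` and `Gq` are differentiable at `μ = 0` with
`Fq(0) = Gq(0) = E[h]` and `Fq'(0) = Gq'(0) = -Σ_{j=1}^T E[h ε_j/σ_j]`. -/
theorem stmt15 {Ω : Type*} {m0 : MeasurableSpace Ω}
    (P : Measure Ω) [IsProbabilityMeasure P]
    (T : ℕ) (ε : ℕ → Ω → ℝ) (hεmeas : ∀ k, Measurable (ε k))
    (hεindep : iIndepFun (fun i : Fin T => ε (i.val + 1)) P)
    (hεgauss : ∀ k, 1 ≤ k → k ≤ T → Measure.map (ε k) P = gaussianReal 0 1)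
    (F : ℕ → MeasurableSpace Ω)
    (hF : ∀ n, F n = ⨆ k ∈ Finset.Icc 1 n, MeasurableSpace.comap (ε k) inferInstance)
    (σ : ℕ → Ω → ℝ)
    (hσpred : ∀ k, 1 ≤ k → Measurable[F (k - 1)] (σ k))
    (hσpos : ∀ k ω, 0 < σ k ω)
    (ω₀ : ℝ) (hω₀ : 0 < ω₀)
    (hσlb : ∀ k, 1 ≤ k → k ≤ T → ∀ᵐ ω ∂P, ω₀ ≤ σ k ω ^ 2)
    (h : Ω → ℝ) (hhmeas : Measurable[F T] h) (hhL2 : MemLp h 2 P)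
    (Fq Gq : ℝ → ℝ)
    (hFq : ∀ μ : ℝ, Fq μ = ∫ ω, h ω * ∏ j ∈ Finset.Icc 1 T,
        (1 - μ / σ j ω * ε j ω) ∂P)
    (hGq : ∀ μ : ℝ, Gq μ = ∫ ω, h ω * ∏ j ∈ Finset.Icc 1 T,
        Real.exp (-(μ / σ j ω) * ε j ω - μ ^ 2 / (2 * σ j ω ^ 2)) ∂P) :
    Fq 0 = ∫ ω, h ω ∂P ∧ Gq 0 = ∫ ω, h ω ∂P
    ∧ HasDerivAt Fq (-∑ j ∈ Finset.Icc 1 T, ∫ ω, h ω * (ε j ω / σ j ω) ∂P) 0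
    ∧ HasDerivAt Gq (-∑ j ∈ Finset.Icc 1 T, ∫ ω, h ω * (ε j ω / σ j ω) ∂P) 0 :=
  stmt15_general (m0 := m0) P T ε hεmeas hεindep hεgauss F hF σ hσpred ω₀ hω₀ hσlb h hhL2 Fq Gq hFq
    hGq
end
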